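/- arXiv:1404.3925 — 3 statements merged into one kernel-verified Lean document; each statement's English description precedes it below -/
import Mathlib

section
/- A word w : List (α × Bool) belongs to Func if and only if either w = [(a, false)] for some a : α, or w contains at least one letter of the form (a, false) and at least one letter of the form (b, true). (Characterization of functional types in a free pivotal category: a type is functional iff it is a basic type, or a product of basic types with exponents in which at least one exponent is +1 and at least one exponent is −1.) -/
/-- The dual of a word: reverse and negate every sign. -/
def inv {α : Type*} (w : List (α × Bool)) : List (α × Bool) :=
  (w.reverse).map fun p => (p.1, !p.2)

/-- Functional types in the free pivotal category on `α`, modelled as words over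
`α × Bool`: the smallest set containing the one-letter word `[(a, false)]` for every
`a : α`, closed under `(u, v) ↦ u ++ inv v` and `(u, v) ↦ inv u ++ v`. -/
inductive Func {α : Type*} : List (α × Bool) → Prop
  | base (a : α) : Func [(a, false)]
  | div {u v : List (α × Bool)} : Func u → Func v → Func (u ++ inv v)
  | under {u v : List (α × Bool)} : Func u → Func v → Func (inv u ++ v)

lemma inv_invol {α : Type*} (w : List (α × Bool)) : inv (inv w) = w := by
  simp only [inv, List.map_reverse, List.reverse_reverse, List.map_map]
  conv_rhs => rw [← List.map_id w]
  exact List.map_congr_left fun p _ => by simp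

lemma mem_inv {α : Type*} {w : List (α × Bool)} {x : α} {b : Bool} :
    (x, b) ∈ inv w ↔ (x, !b) ∈ w := by
  constructor
  · intro h
    simp only [inv, List.mem_map, List.mem_reverse] at h
    obtain ⟨p, hp, he⟩ := h
    obtain ⟨h1, h2⟩ := Prod.mk.injEq .. ▸ he
    subst h1; rw [← h2, Bool.not_not]; exact hp
  · intro h
    simp only [inv, List.mem_map, List.mem_reverse]
    exact ⟨(x, !b), h, by simp⟩

lemma func_pos {α : Type*} {w : List (α × Bool)} (h : Func w) :
    ∃ a : α, (a, false) ∈ w := by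
  induction h with
  | base a => exact ⟨a, by simp⟩
  | div hu hv ihu ihv => obtain ⟨a, ha⟩ := ihu; exact ⟨a, by simp [ha]⟩
  | under hu hv ihu ihv => obtain ⟨a, ha⟩ := ihv; exact ⟨a, by simp [ha]⟩

lemma inv_length {α : Type*} (w : List (α × Bool)) : (inv w).length = w.length := by
  simp [inv]

lemma key {α : Type*} : ∀ n (w : List (α × Bool)), w.length ≤ n →
    (∃ a : α, (a, false) ∈ w) → (∃ b : α, (b, true) ∈ w) → Func w := by
  intro n
  induction n with
  | zero =>
    intro w hl hf _
    obtain ⟨a, ha⟩ := hf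
    rw [List.length_eq_zero_iff.mp (Nat.le_zero.mp hl)] at ha
    simp at ha
  | succ n ih =>
    rintro (_ | ⟨⟨c, s⟩, t⟩) hl hf ht
    · obtain ⟨a, ha⟩ := hf; simp at ha
    · simp only [List.length_cons, Nat.add_le_add_iff_right] at hl
      cases s with
      | true =>
        obtain ⟨a, ha⟩ := hf
        have haT : (a, false) ∈ t := by
          rcases List.mem_cons.mp ha with h | h
          · simp at h
          · exact h
        by_cases hT : ∃ b : α, (b, true) ∈ t
        · have ht' : Func t := ih t hl ⟨a, haT⟩ hT
          have he : inv [(c, false)] ++ t = (c, true) :: t := by simp [inv]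
          rw [← he]; exact Func.under (Func.base c) ht'
        · rcases t.eq_nil_or_concat with rfl | ⟨t', ⟨d, s'⟩, rfl⟩
          · simp at haT
          · simp only [List.concat_eq_append] at *
            have hs' : s' = false := by
              cases s' with
              | true => exact absurd ⟨d, by simp⟩ hT
              | false => rfl
            subst hs'
            have hu : Func (inv ((c, true) :: t')) := by
              rcases t' with _ | ⟨⟨x, sx⟩, t''⟩
              · have : inv [(c, true)] = [(c, false)] := by simp [inv]
                rw [this]; exact Func.base c
              · have hx : sx = false := by
                  cases sx with
                  | true => exact absurd ⟨x, by simp⟩ hT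
                  | false => rfl
                subst hx
                apply ih
                · rw [inv_length]
                  simp only [List.length_append, List.length_cons] at hl ⊢
                  omega
                · exact ⟨c, mem_inv.mpr (by simp)⟩
                · exact ⟨x, mem_inv.mpr (by simp)⟩
            have he : inv (inv ((c, true) :: t')) ++ [(d, false)] =
                (c, true) :: (t' ++ [(d, false)]) := by
              rw [inv_invol]; simp
            rw [← he]; exact Func.under hu (Func.base d)
      | false =>
        obtain ⟨b, hb⟩ := ht
        have hbT : (b, true) ∈ t := by
          rcases List.mem_cons.mp hb with h | h
          · simp at h
          · exact h
        by_cases hF : ∃ a : α, (a, false) ∈ t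
        · have hv : Func (inv t) := by
            apply ih
            · rw [inv_length]; exact hl
            · exact ⟨b, mem_inv.mpr (by simpa using hbT)⟩
            · obtain ⟨a, haT⟩ := hF
              exact ⟨a, mem_inv.mpr (by simpa using haT)⟩
          have he : [(c, false)] ++ inv (inv t) = (c, false) :: t := by
            rw [inv_invol]; simp
          rw [← he]; exact Func.div (Func.base c) hv
        · rcases t.eq_nil_or_concat with rfl | ⟨t', ⟨d, s'⟩, rfl⟩
          · simp at hbT
          · simp only [List.concat_eq_append] at *
            have hs' : s' = true := by
              cases s' with
              | false => exact absurd ⟨d, by simp⟩ hF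
              | true => rfl
            subst hs'
            have hu : Func ((c, false) :: t') := by
              rcases t' with _ | ⟨⟨x, sx⟩, t''⟩
              · exact Func.base c
              · have hx : sx = true := by
                  cases sx with
                  | false => exact absurd ⟨x, by simp⟩ hF
                  | true => rfl
                subst hx
                apply ih
                · simp only [List.length_append, List.length_cons] at hl ⊢
                  omega
                · exact ⟨c, by simp⟩
                · exact ⟨x, by simp⟩
            have he : ((c, false) :: t') ++ inv [(d, false)] =
                (c, false) :: (t' ++ [(d, true)]) := by simp [inv]
            rw [← he]; exact Func.div hu (Func.base d)

/-- Characterization of functional types in a free pivotal category: a word is functional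
iff it is a single generator, or it contains at least one letter with exponent `+1`
(i.e. of the form `(a, false)`) and at least one letter with exponent `−1`
(i.e. of the form `(b, true)`). -/
theorem func_iff {α : Type*} (w : List (α × Bool)) :
    Func w ↔ (∃ a : α, w = [(a, false)]) ∨
      ((∃ a : α, (a, false) ∈ w) ∧ (∃ b : α, (b, true) ∈ w)) := by
  constructor
  · intro h
    induction h with
    | base a => exact Or.inl ⟨a, rfl⟩
    | div hu hv ihu ihv =>
        obtain ⟨a, ha⟩ := func_pos hu
        obtain ⟨b, hb⟩ := func_pos hv
        refine Or.inr ⟨⟨a, List.mem_append_left _ ha⟩,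
          ⟨b, List.mem_append_right _ (mem_inv.mpr (by simpa using hb))⟩⟩
    | under hu hv ihu ihv =>
        obtain ⟨a, ha⟩ := func_pos hu
        obtain ⟨b, hb⟩ := func_pos hv
        refine Or.inr ⟨⟨b, List.mem_append_right _ hb⟩,
          ⟨a, List.mem_append_left _ (mem_inv.mpr (by simpa using ha))⟩⟩
  · rintro (⟨a, rfl⟩ | ⟨hf, ht⟩)
    · exact Func.base a
    · exact key w.length w le_rfl hf ht
end

section
/- Let s, z₀, z₁, y₀, y₁ : α be pairwise distinct and set tS = Finsupp.single s 1, t₀ = Finsupp.single z₀ 1 + 2 • Finsupp.single y₀ 1, tZ = Finsupp.single z₀ 1 + Finsupp.single z₁ 1, t₁ = Finsupp.single z₁ 1 + 2 • Finsupp.single y₁ 1 in α →₀ ℕ. Then: (i) for each ε : Bool there exists a quadruple (hS, h₀, hZ, h₁) of functional signed multisets with forget hS = tS, forget h₀ = t₀, forget hZ = tZ, forget h₁ = t₁, such that the list [hS, h₀, hZ, h₁] is grammatical for s and h₀ (z₀, ε) = 1 and h₁ (z₁, !ε) = 1; and (ii) every quadruple (hS, h₀, hZ, h₁) of functional signed multisets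 with these images under forget whose list is grammatical for s satisfies h₀ (z₀, false) + h₁ (z₁, false) = 1, i.e. z₀ in h₀ and z₁ in h₁ carry opposite exponents. -/
/-- The positive part of a signed multiset: `posPart μ a = μ (a, false)`. -/
noncomputable def posPart {α : Type*} (μ : α × Bool →₀ ℕ) : α →₀ ℕ :=
  Finsupp.comapDomain (fun a => (a, false)) μ (fun _ _ _ _ h => congrArg Prod.fst h)

/-- The negative part of a signed multiset: `negPart μ a = μ (a, true)`. -/
noncomputable def negPart {α : Type*} (μ : α × Bool →₀ ℕ) : α →₀ ℕ :=
  Finsupp.comapDomain (fun a => (a, true)) μ (fun _ _ _ _ h => congrArg Prod.fst h)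

/-- Forgetting the signs: `forget μ a = μ (a, false) + μ (a, true)`. -/
noncomputable def forget {α : Type*} (μ : α × Bool →₀ ℕ) : α →₀ ℕ :=
  posPart μ + negPart μ

/-- The signed sum: `sgn μ a = (μ (a, false) : ℤ) − (μ (a, true) : ℤ)`. -/
noncomputable def sgn {α : Type*} (μ : α × Bool →₀ ℕ) : α →₀ ℤ :=
  (posPart μ).mapRange (Nat.cast : ℕ → ℤ) Nat.cast_zero
    - (negPart μ).mapRange (Nat.cast : ℕ → ℤ) Nat.cast_zero

/-- A signed multiset is functional if it is a single generator, or it has at least one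
occurrence with exponent `+1` and at least one with exponent `−1`. -/
def Functional {α : Type*} (μ : α × Bool →₀ ℕ) : Prop :=
  (∃ a : α, μ = Finsupp.single (a, false) 1) ∨
    (∃ a b : α, 0 < μ (a, false) ∧ 0 < μ (b, true))

/-- A list of signed multisets is grammatical for `s` if the signed sums of its entries
add up to `Finsupp.single s 1`. -/
noncomputable def Grammatical {α : Type*} (s : α) (l : List (α × Bool →₀ ℕ)) : Prop :=
  (l.map sgn).sum = Finsupp.single s 1

/-!
At `z₀` only `h₀` and `hZ` contribute to the signed sum, each with a single letter, so
grammaticality forces those two letters to carry opposite exponents; likewise `hZ` and `h₁` at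
`z₁`. A functional `hZ` with `forget hZ = z₀ + z₁` has exactly one letter of each sign, hence the
exponents of `z₀` in `h₀` and of `z₁` in `h₁` are opposite. Conversely, choosing `hZ` with either
sign pattern and completing `h₀`, `h₁` by the cancelling pairs `y y*` gives both solutions.
-/

section SignedMultiset

variable {α : Type*}

@[simp]
lemma forget_apply (μ : α × Bool →₀ ℕ) (a : α) :
    forget μ a = μ (a, false) + μ (a, true) := rfl

@[simp]
lemma sgn_apply (μ : α × Bool →₀ ℕ) (a : α) :
    sgn μ a = (μ (a, false) : ℤ) - μ (a, true) := rfl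

lemma forget_add (μ ν : α × Bool →₀ ℕ) : forget (μ + ν) = forget μ + forget ν := by
  ext a; simp only [forget_apply, Finsupp.add_apply]; ring

lemma sgn_add (μ ν : α × Bool →₀ ℕ) : sgn (μ + ν) = sgn μ + sgn ν := by
  ext a; simp only [sgn_apply, Finsupp.add_apply]; push_cast; ring

lemma forget_single (a : α) (ε : Bool) (n : ℕ) :
    forget (Finsupp.single (a, ε) n) = Finsupp.single a n := by
  classical
  ext b; cases ε <;> by_cases h : a = b <;> simp [h]

lemma sgn_single_false (a : α) (n : ℕ) :
    sgn (Finsupp.single (a, false) n) = Finsupp.single a (n : ℤ) := by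
  classical
  ext b; by_cases h : a = b <;> simp [h]

lemma sgn_single_add_sgn_single_not (a : α) (ε : Bool) (n : ℕ) :
    sgn (Finsupp.single (a, ε) n) + sgn (Finsupp.single (a, !ε) n) = 0 := by
  classical
  ext b; cases ε <;> by_cases h : a = b <;> simp [h]

lemma forget_apply_pos_of_pos {μ : α × Bool →₀ ℕ} {a : α} {ε : Bool} (h : 0 < μ (a, ε)) :
    0 < forget μ a := by
  cases ε <;> simp only [forget_apply] <;> omega

lemma Functional.apply_false_add_apply_false_eq_one {μ : α × Bool →₀ ℕ} (hμ : Functional μ)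
    {a b : α} (hab : a ≠ b) (h : forget μ = Finsupp.single a 1 + Finsupp.single b 1) :
    μ (a, false) + μ (b, false) = 1 := by
  classical
  have hf : ∀ c, forget μ c = (if a = c then 1 else 0) + (if b = c then 1 else 0) := fun c => by
    simp only [h, Finsupp.add_apply, Finsupp.single_apply]
  have ha := hf a
  have hb := hf b
  simp only [forget_apply, if_pos, if_neg hab, if_neg (Ne.symm hab)] at ha hb
  have mem : ∀ {c ε}, 0 < μ (c, ε) → c = a ∨ c = b := fun hc => by
    have := hf _ ▸ forget_apply_pos_of_pos hc
    by_contra! hne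
    simp [Ne.symm hne.1, Ne.symm hne.2] at this
  rcases hμ with ⟨c, rfl⟩ | ⟨c, d, hc, hd⟩
  · simp [Finsupp.single_apply] at ha hb
    exact absurd (ha.symm.trans hb) hab
  · rcases mem hc with rfl | rfl <;> rcases mem hd with rfl | rfl <;> omega

end SignedMultiset

lemma negation_sentence_solvable {α : Type*} {s z₀ z₁ y₀ y₁ : α} (hz₀ : z₀ ≠ y₀)
    (hz₁ : z₁ ≠ y₁) (ε : Bool) :
    ∃ hS h₀ hZ h₁ : α × Bool →₀ ℕ,
      Functional hS ∧ Functional h₀ ∧ Functional hZ ∧ Functional h₁ ∧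
      forget hS = Finsupp.single s 1 ∧
      forget h₀ = Finsupp.single z₀ 1 + 2 • Finsupp.single y₀ 1 ∧
      forget hZ = Finsupp.single z₀ 1 + Finsupp.single z₁ 1 ∧
      forget h₁ = Finsupp.single z₁ 1 + 2 • Finsupp.single y₁ 1 ∧
      Grammatical s [hS, h₀, hZ, h₁] ∧
      h₀ (z₀, ε) = 1 ∧ h₁ (z₁, !ε) = 1 := by
  classical
  set atom : α → Bool → α × Bool →₀ ℕ := fun a ε => Finsupp.single (a, ε) 1 with atom_def
  refine ⟨atom s false, atom z₀ ε + atom y₀ false + atom y₀ true, atom z₀ (!ε) + atom z₁ ε,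
    atom z₁ (!ε) + atom y₁ false + atom y₁ true, Or.inl ⟨s, rfl⟩,
    Or.inr ⟨y₀, y₀, by simp [atom_def], by simp [atom_def]⟩, ?_,
    Or.inr ⟨y₁, y₁, by simp [atom_def], by simp [atom_def]⟩, ?_, ?_, ?_, ?_, ?_, ?_, ?_⟩
  · cases ε
    exacts [Or.inr ⟨z₁, z₀, by simp [atom_def], by simp [atom_def]⟩,
      Or.inr ⟨z₀, z₁, by simp [atom_def], by simp [atom_def]⟩]
  · exact forget_single s false 1
  · simp only [atom_def, forget_add, forget_single, two_nsmul, add_assoc]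
  · simp only [atom_def, forget_add, forget_single]
  · simp only [atom_def, forget_add, forget_single, two_nsmul, add_assoc]
  · have cancel : ∀ a ε, sgn (atom a ε) + sgn (atom a !ε) = 0 := fun a ε =>
      sgn_single_add_sgn_single_not a ε 1
    have cancel_dual : ∀ a, sgn (atom a false) + sgn (atom a true) = 0 := fun a => cancel a false
    simp only [Grammatical, List.map_cons, List.map_nil, List.sum_cons, List.sum_nil, sgn_add]
    have head : sgn (atom s false) = Finsupp.single s 1 := by simpa using sgn_single_false s 1
    linear_combination (norm := module) head + cancel z₀ ε + cancel z₁ ε +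
      cancel_dual y₀ + cancel_dual y₁
  · simp [atom_def, hz₀]
  · simp [atom_def, hz₁]

lemma negation_sentence_opposite_exponents {α : Type*} {s z₀ z₁ y₀ y₁ : α}
    (hdist : List.Pairwise (· ≠ ·) [s, z₀, z₁, y₀, y₁]) {hS h₀ hZ h₁ : α × Bool →₀ ℕ}
    (fZ : Functional hZ)
    (ffS : forget hS = Finsupp.single s 1)
    (ff₀ : forget h₀ = Finsupp.single z₀ 1 + 2 • Finsupp.single y₀ 1)
    (ffZ : forget hZ = Finsupp.single z₀ 1 + Finsupp.single z₁ 1)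
    (ff₁ : forget h₁ = Finsupp.single z₁ 1 + 2 • Finsupp.single y₁ 1)
    (gram : Grammatical s [hS, h₀, hZ, h₁]) :
    h₀ (z₀, false) + h₁ (z₁, false) = 1 := by
  simp only [List.pairwise_cons, List.mem_cons, List.not_mem_nil, or_false, forall_eq_or_imp,
    forall_eq, List.Pairwise.nil, and_true] at hdist
  obtain ⟨⟨hs₀, hs₁, -, -⟩, ⟨h₀₁, h₀y₀, h₀y₁⟩, ⟨h₁y₀, h₁y₁⟩, -⟩ := hdist
  have hZsplit := fZ.apply_false_add_apply_false_eq_one h₀₁ ffZ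
  have balance : ∀ a, s ≠ a → sgn hS a + sgn h₀ a + sgn hZ a + sgn h₁ a = 0 := fun a ha => by
    simpa [Grammatical, Finsupp.single_apply, ha, add_assoc] using DFunLike.congr_fun gram a
  have counts : ∀ a, _ ∧ _ ∧ _ ∧ _ := fun a => ⟨DFunLike.congr_fun ffS a,
    DFunLike.congr_fun ff₀ a, DFunLike.congr_fun ffZ a, DFunLike.congr_fun ff₁ a⟩
  have at₀ := balance z₀ hs₀
  have at₁ := balance z₁ hs₁
  have c₀ := counts z₀
  have c₁ := counts z₁
  simp [hs₀, hs₁, h₀₁, h₀y₀, h₀y₁, h₁y₀, h₁y₁, Ne.symm h₀₁] at at₀ at₁ c₀ c₁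
  omega

/-- The negation sentence `(S,s) (X⁰,t₀) (Z,tZ) (X¹,t₁)` forces opposite exponents:
(i) for each `ε : Bool` there is a solution with `h₀ (z₀, ε) = 1` and `h₁ (z₁, !ε) = 1`;
(ii) every solution satisfies `h₀ (z₀, false) + h₁ (z₁, false) = 1`, i.e. `z₀` in `h₀`
and `z₁` in `h₁` carry opposite exponents. -/
theorem negation_sentence {α : Type*} (s z₀ z₁ y₀ y₁ : α)
    (hdist : List.Pairwise (· ≠ ·) [s, z₀, z₁, y₀, y₁]) :
    (∀ ε : Bool, ∃ hS h₀ hZ h₁ : α × Bool →₀ ℕ,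
      Functional hS ∧ Functional h₀ ∧ Functional hZ ∧ Functional h₁ ∧
      forget hS = Finsupp.single s 1 ∧
      forget h₀ = Finsupp.single z₀ 1 + 2 • Finsupp.single y₀ 1 ∧
      forget hZ = Finsupp.single z₀ 1 + Finsupp.single z₁ 1 ∧
      forget h₁ = Finsupp.single z₁ 1 + 2 • Finsupp.single y₁ 1 ∧
      Grammatical s [hS, h₀, hZ, h₁] ∧
      h₀ (z₀, ε) = 1 ∧ h₁ (z₁, !ε) = 1) ∧
    (∀ hS h₀ hZ h₁ : α × Bool →₀ ℕ,
      Functional hS → Functional h₀ → Functional hZ → Functional h₁ →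
      forget hS = Finsupp.single s 1 →
      forget h₀ = Finsupp.single z₀ 1 + 2 • Finsupp.single y₀ 1 →
      forget hZ = Finsupp.single z₀ 1 + Finsupp.single z₁ 1 →
      forget h₁ = Finsupp.single z₁ 1 + 2 • Finsupp.single y₁ 1 →
      Grammatical s [hS, h₀, hZ, h₁] →
      h₀ (z₀, false) + h₁ (z₁, false) = 1) := by
  have hz₀ : z₀ ≠ y₀ := by simp_all [List.pairwise_cons]
  have hz₁ : z₁ ≠ y₁ := by simp_all [List.pairwise_cons]
  exact ⟨negation_sentence_solvable hz₀ hz₁,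
    fun _ _ _ _ _ _ fZ _ => negation_sentence_opposite_exponents hdist fZ⟩
end

section
/- Assume every triple (a, b, c) ∈ T has pairwise distinct entries. Then the betweenness instance (A, T) has a solution — i.e. there exists a linear order < on A such that for every (a, b, c) ∈ T either a < b < c or c < b < a — if and only if the grammar induction sample has a solution, i.e. there exist a word h_Y and, for each t = (a,b,c) ∈ T, words h_{t,1}, h_{t,2}, h_{t,3}, h_{t,4} over β × Bool such that the letter multiset of h_Y is y, those of h_{t,1} and h_{t,3} are c₁(t), that of h_{t,2} is c₂(t), that of h_{t,4} is c₄(t), and for every t ∈ T the concatenation h_Y ++ h_{t,1} ++ h_{t,2} ++ h_{t,3} ++ h_{t,4} reduces to the empty word (the same word h_Y being used in every sentence). (Mathematical core of the theorem that grammar induction from a compact closed category to a pivotal category is NP-complete, via reduction from the betweenness problem.) -/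
/-- The subtyping relation on basic types `β = A ⊕ (A × A × A)`: `R g g'` holds iff
`g = x` for some `x : A`, `g' = d_t` for some triple `t = (a,b,c) ∈ T`, and `x = a` or
`x = c`. -/
def R {A : Type*} (T : Finset (A × A × A)) :
    (A ⊕ (A × A × A)) → (A ⊕ (A × A × A)) → Prop := fun g g' =>
  ∃ (x : A) (t : A × A × A), t ∈ T ∧ g = Sum.inl x ∧ g' = Sum.inr t ∧
    (x = t.1 ∨ x = t.2.2)

/-- One-step contraction of words over `β × Bool`: two adjacent letters
`(g, false), (g', true)` or `(g', true), (g, false)` cancel whenever `g = g'` or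
`R g g'`. -/
inductive Contract {A : Type*} (T : Finset (A × A × A)) :
    List ((A ⊕ (A × A × A)) × Bool) → List ((A ⊕ (A × A × A)) × Bool) → Prop
  | pos (u v : List ((A ⊕ (A × A × A)) × Bool)) (g g' : A ⊕ (A × A × A)) :
      (g = g' ∨ R T g g') → Contract T (u ++ [(g, false), (g', true)] ++ v) (u ++ v)
  | neg (u v : List ((A ⊕ (A × A × A)) × Bool)) (g g' : A ⊕ (A × A × A)) :
      (g = g' ∨ R T g g') → Contract T (u ++ [(g', true), (g, false)] ++ v) (u ++ v)

/-- A word reduces to the empty word if it is related to it by the reflexive-transitive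
closure of contraction. -/
def ReducesToNil {A : Type*} (T : Finset (A × A × A))
    (w : List ((A ⊕ (A × A × A)) × Bool)) : Prop :=
  Relation.ReflTransGen (Contract T) w []

/-- The semantic type `y`: one occurrence of `(x, false)` for each `x ∈ A`. -/
def yType (A : Type*) [Fintype A] : Multiset ((A ⊕ (A × A × A)) × Bool) :=
  (Finset.univ : Finset A).val.map fun x => ((Sum.inl x : A ⊕ (A × A × A)), false)

/-- The set `A \ {a, b, c}` for a triple `t = (a, b, c)`. -/
def wSet {A : Type*} [Fintype A] [DecidableEq A] (t : A × A × A) : Finset A :=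
  Finset.univ \ {t.1, t.2.1, t.2.2}

/-- One occurrence each of `(x, true)` and `(x, false)` for every `x ∈ A \ {a,b,c}`. -/
def wPart {A : Type*} [Fintype A] [DecidableEq A] (t : A × A × A) :
    Multiset ((A ⊕ (A × A × A)) × Bool) :=
  ((wSet t).val.map fun x => ((Sum.inl x : A ⊕ (A × A × A)), true)) +
    ((wSet t).val.map fun x => ((Sum.inl x : A ⊕ (A × A × A)), false))

/-- The semantic type `c₁(t) = d_t⁻¹ w⁻¹ w`. -/
def c1Type {A : Type*} [Fintype A] [DecidableEq A] (t : A × A × A) :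
    Multiset ((A ⊕ (A × A × A)) × Bool) :=
  ((Sum.inr t : A ⊕ (A × A × A)), true) ::ₘ wPart t

/-- The semantic type `c₂(t) = b⁻¹ w⁻¹ w`. -/
def c2Type {A : Type*} [Fintype A] [DecidableEq A] (t : A × A × A) :
    Multiset ((A ⊕ (A × A × A)) × Bool) :=
  ((Sum.inl t.2.1 : A ⊕ (A × A × A)), true) ::ₘ wPart t

/-- The semantic type `c₄(t) = w⁻¹`. -/
def c4Type {A : Type*} [Fintype A] [DecidableEq A] (t : A × A × A) :
    Multiset ((A ⊕ (A × A × A)) × Bool) :=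
  (wSet t).val.map fun x => ((Sum.inl x : A ⊕ (A × A × A)), true)


/-!
A linear order on `A` is recorded by `h_Y`, the letters of `A` listed in increasing order. Read
the sentence for `t = (a, b, c)` as a stack: `h_{t,1}`, `h_{t,2}` and `h_{t,3}` in turn cancel
the outer end of `t` against `d_t*`, then `b` against `b*`, then the inner end against `d_t*`,
each time unstacking and restacking the letters above it; `h_{t,4}` cancels what is left. This
works because `b` lies between `a` and `c` in `h_Y`.

Conversely, send `a`, `c` and `d_t` to the transposition `(0 1)` of `S₃`, `b` to `(0 2)`, every
other basic type to `1`, and dual letters to inverses. The only `d`-letter in the sentence for `t`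
is `d_t`, so every contraction in it preserves the product, which must therefore be `1`. Only
`a`, `b`, `c` contribute, and the product is `1` exactly when `b` lies between `a` and `c` in
`h_Y`; ordering `A` by position in `h_Y` solves the betweenness instance.
-/

open Relation

lemma List.exists_eq_append_cons_of_cons_sublist {α : Type*} {a : α} {l s : List α}
    (h : (a :: l).Sublist s) : ∃ L M, s = L ++ a :: M ∧ l.Sublist M := by
  obtain ⟨r₁, r₂, rfl, ha, hl⟩ := List.cons_sublist_iff.1 h
  obtain ⟨L, M, rfl⟩ := List.append_of_mem ha
  exact ⟨L, M ++ r₂, by simp, hl.trans (List.sublist_append_right M r₂)⟩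

lemma List.cons_cons_singleton_sublist_iff {α : Type*} [LinearOrder α] {s : List α}
    (hs : s.Pairwise (· < ·)) {x y z : α} (hx : x ∈ s) (hy : y ∈ s) (hz : z ∈ s) :
    [x, y, z].Sublist s ↔ x < y ∧ y < z := by
  refine ⟨fun h => ?_, fun ⟨hxy, hyz⟩ => ?_⟩
  · have h := hs.sublist h
    simp only [List.pairwise_cons, List.mem_cons, List.not_mem_nil] at h
    exact ⟨h.1 y (by simp), h.2.1 z (by simp)⟩
  · have hxyz : [x, y, z].Pairwise (· < ·) := by simp [hxy, hyz, hxy.trans hyz]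
    exact List.sublist_of_subperm_of_pairwise
      (List.subperm_of_subset hxyz.nodup (by simp [List.subset_def, hx, hy, hz])) hxyz hs

lemma List.Nodup.pairwise_idxOf_lt {α : Type*} [DecidableEq α] {s : List α} (h : s.Nodup) :
    s.Pairwise fun x y => s.idxOf x < s.idxOf y := by
  rw [List.pairwise_iff_getElem]
  intro i j hi hj hij
  rwa [h.idxOf_getElem i hi, h.idxOf_getElem j hj]

lemma List.Perm.eq_triple_cases {α : Type*} {a b c : α} {l : List α} (h : l.Perm [a, b, c]) :
    l = [a, b, c] ∨ l = [c, b, a] ∨ l = [b, a, c] ∨ l = [b, c, a] ∨ l = [c, a, b] ∨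
      l = [a, c, b] := by
  have h := List.mem_permutations.2 h
  simp only [List.permutations, List.permutationsAux, List.permutationsAux.rec] at h
  simp at h
  tauto

lemma List.prod_map_filter_of_eq_one {α M : Type*} [Monoid M] {f : α → M} (p : α → Bool)
    {l : List α} (h : ∀ x ∈ l, p x = false → f x = 1) :
    ((l.filter p).map f).prod = (l.map f).prod := by
  induction l with
  | nil => rfl
  | cons x l ih =>
    have ih := ih fun y hy => h y (List.mem_cons_of_mem x hy)
    cases hx : p x <;> simp [hx, ih, h x List.mem_cons_self]

lemma List.prod_map_eq_of_coe_eq_cons {α M : Type*} [Monoid M] {f : α → M} {l : List α}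
    {a : α} {m : Multiset α} (hl : (l : Multiset α) = a ::ₘ m) (hm : ∀ x ∈ m, f x = 1) :
    (l.map f).prod = f a := by
  have hperm : l.Perm (a :: m.toList) :=
    Multiset.coe_eq_coe.1 (by rw [hl, ← Multiset.cons_coe, Multiset.coe_toList])
  have hval : ∀ y ∈ l.map f, y = f a ∨ y = 1 := by
    intro y hy
    obtain ⟨x, hx, rfl⟩ := List.mem_map.1 hy
    rcases List.mem_cons.1 (hperm.subset hx) with rfl | hx
    exacts [.inl rfl, .inr (hm x (by simpa using hx))]
  have hcomm : (l.map f).Pairwise Commute := List.pairwise_of_forall_mem_list fun x hx y hy => by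
    rcases hval x hx with rfl | rfl <;> rcases hval y hy with rfl | rfl <;> simp [Commute.refl]
  rw [(hperm.map f).prod_eq' hcomm, List.map_cons, List.prod_cons,
    List.prod_eq_one (by simpa using hm), mul_one]

section Words

variable {A : Type*}

def posWord (l : List A) : List ((A ⊕ (A × A × A)) × Bool) :=
  l.map fun x => (Sum.inl x, false)

def dualWord (l : List A) : List ((A ⊕ (A × A × A)) × Bool) :=
  l.reverse.map fun x => (Sum.inl x, true)

/-- The block `posWord Y ++ dualWord Y` cancels in place; it only pads the multiset of letters. -/
def popWord (X Y : List A) (g : A ⊕ (A × A × A)) : List ((A ⊕ (A × A × A)) × Bool) :=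
  dualWord X ++ (g, true) :: (posWord Y ++ dualWord Y ++ posWord X)

@[simp] lemma posWord_append (l l' : List A) : posWord (l ++ l') = posWord l ++ posWord l' :=
  List.map_append

@[simp] lemma posWord_cons (x : A) (l : List A) :
    posWord (x :: l) = (Sum.inl x, false) :: posWord l := rfl

@[simp] lemma dualWord_cons (x : A) (l : List A) :
    dualWord (x :: l) = dualWord l ++ [(Sum.inl x, true)] := by
  simp [dualWord]

end Words

namespace Contract

variable {A : Type*} {T : Finset (A × A × A)} {w w' : List ((A ⊕ (A × A × A)) × Bool)}

lemma append_left (h : Contract T w w') (u : List ((A ⊕ (A × A × A)) × Bool)) :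
    Contract T (u ++ w) (u ++ w') := by
  cases h with
  | pos v v' g g' hg => simpa using pos (u ++ v) v' g g' hg
  | neg v v' g g' hg => simpa using neg (u ++ v) v' g g' hg

lemma append_right (h : Contract T w w') (u : List ((A ⊕ (A × A × A)) × Bool)) :
    Contract T (w ++ u) (w' ++ u) := by
  cases h with
  | pos v v' g g' hg => simpa using pos v (v' ++ u) g g' hg
  | neg v v' g g' hg => simpa using neg v (v' ++ u) g g' hg

lemma sublist (h : Contract T w w') : w'.Sublist w := by
  cases h <;> simp

end Contract

section Reduction

variable {A : Type*} {T : Finset (A × A × A)}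

lemma reflTransGen_contract_append {w₁ w₁' w₂ w₂' : List ((A ⊕ (A × A × A)) × Bool)}
    (h₁ : ReflTransGen (Contract T) w₁ w₁') (h₂ : ReflTransGen (Contract T) w₂ w₂') :
    ReflTransGen (Contract T) (w₁ ++ w₂) (w₁' ++ w₂') :=
  (h₁.lift (· ++ w₂) fun _ _ h => h.append_right w₂).trans
    (h₂.lift (w₁' ++ ·) fun _ _ h => h.append_left w₁')

lemma reflTransGen_contract_posWord_append_dualWord (l : List A) :
    ReflTransGen (Contract T) (posWord l ++ dualWord l) [] := by
  induction l with
  | nil => rfl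
  | cons x l ih =>
    have hx : Contract T ([] ++ [(Sum.inl x, false), (Sum.inl x, true)] ++ []) [] :=
      .pos [] [] _ _ (.inl rfl)
    simpa using (reflTransGen_contract_append (.refl (a := [(Sum.inl x, false)]))
      (reflTransGen_contract_append ih (.refl (a := [(Sum.inl x, true)])))).tail hx

lemma reflTransGen_contract_popWord (u X Y : List A) (x : A) (g : A ⊕ (A × A × A))
    (hg : Sum.inl x = g ∨ R T (Sum.inl x) g) :
    ReflTransGen (Contract T) (posWord (u ++ x :: X) ++ popWord X Y g) (posWord (u ++ X)) := by
  have hx : Contract T (posWord u ++ [(Sum.inl x, false), (g, true)] ++ posWord X)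
      (posWord u ++ posWord X) := .pos _ _ _ _ hg
  have := reflTransGen_contract_append (.refl (a := posWord u ++ [(Sum.inl x, false)]))
    (reflTransGen_contract_append (reflTransGen_contract_posWord_append_dualWord (T := T) X)
      (reflTransGen_contract_append (.refl (a := [(g, true)]))
        (reflTransGen_contract_append (reflTransGen_contract_posWord_append_dualWord (T := T) Y)
          (.refl (a := posWord X)))))
  simpa [popWord] using this.tail (by simpa using hx)

lemma reducesToNil_posWord_append_popWord (L M₁ M₂ M₃ : List A) (p b q : A)
    (g : A ⊕ (A × A × A)) (hp : Sum.inl p = g ∨ R T (Sum.inl p) g)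
    (hq : Sum.inl q = g ∨ R T (Sum.inl q) g) :
    ReducesToNil T (posWord (L ++ p :: (M₁ ++ b :: (M₂ ++ q :: M₃))) ++
      popWord M₃ (L ++ M₁ ++ M₂) g ++ popWord (M₂ ++ M₃) (L ++ M₁) (Sum.inl b) ++
      popWord (M₁ ++ M₂ ++ M₃) L g ++ dualWord (L ++ M₁ ++ M₂ ++ M₃)) := by
  have r₁ := reflTransGen_contract_popWord (L ++ p :: (M₁ ++ b :: M₂)) M₃
    (L ++ M₁ ++ M₂) q g hq
  have r₂ := reflTransGen_contract_popWord (T := T) (L ++ p :: M₁) (M₂ ++ M₃) (L ++ M₁) b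
    (Sum.inl b) (.inl rfl)
  have r₃ := reflTransGen_contract_popWord L (M₁ ++ M₂ ++ M₃) L p g hp
  have r₄ := reflTransGen_contract_posWord_append_dualWord (T := T) (L ++ M₁ ++ M₂ ++ M₃)
  simp only [List.append_assoc, List.cons_append] at r₁ r₂ r₃ r₄
  simpa only [ReducesToNil, List.append_assoc] using
    (reflTransGen_contract_append ((reflTransGen_contract_append
      ((reflTransGen_contract_append r₁ .refl).trans r₂) .refl).trans r₃) .refl).trans r₄

end Reduction

section OrderToSentence

variable {A : Type*} [Fintype A] [DecidableEq A]

lemma coe_popWord {t : A × A × A} {X Y : List A} (hXY : (wSet t).val = ↑(X ++ Y))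
    (g : A ⊕ (A × A × A)) : (popWord X Y g : Multiset _) = (g, true) ::ₘ wPart t := by
  simp only [popWord, posWord, dualWord, wPart, hXY, ← Multiset.cons_coe, ← Multiset.coe_add,
    ← Multiset.map_coe, Multiset.coe_reverse, Multiset.map_add, ← Multiset.singleton_add]
  abel

lemma coe_dualWord {t : A × A × A} {X : List A} (hX : (wSet t).val = ↑X) :
    (dualWord X : Multiset _) = c4Type t := by
  simp [dualWord, c4Type, hX]

lemma wSet_val_eq {t : A × A × A} (hd : t.1 ≠ t.2.1 ∧ t.1 ≠ t.2.2 ∧ t.2.1 ≠ t.2.2)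
    {p q : A} (hpq : p = t.1 ∧ q = t.2.2 ∨ p = t.2.2 ∧ q = t.1) (L M₁ M₂ M₃ : List A)
    (hs : (↑(L ++ p :: (M₁ ++ t.2.1 :: (M₂ ++ q :: M₃))) : Multiset A) = Finset.univ.val) :
    (wSet t).val = ↑(L ++ M₁ ++ M₂ ++ M₃) := by
  obtain ⟨a, b, c⟩ := t
  obtain ⟨hab, hac, hbc⟩ := hd
  dsimp only at hab hac hbc hpq hs ⊢
  have habc : ({a, b, c} : Finset A).val = a ::ₘ b ::ₘ {c} := by
    rw [Finset.insert_val_of_notMem (by simp [hab, hac]),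
      Finset.insert_val_of_notMem (by simp [hbc]), Finset.singleton_val]
  have huniv : Finset.univ.val =
      ({a, b, c} : Finset A).val + ((L ++ M₁ ++ M₂ ++ M₃ : List A) : Multiset A) := by
    rw [← hs, habc]
    rcases hpq with ⟨rfl, rfl⟩ | ⟨rfl, rfl⟩ <;>
    · simp only [← Multiset.cons_coe, ← Multiset.coe_add, ← Multiset.singleton_add]
      abel
  rw [wSet, Finset.sdiff_val, huniv, add_tsub_cancel_left]

lemma exists_reducesToNil_of_sublist {T : Finset (A × A × A)} {s : List A}
    (hs : (s : Multiset A) = Finset.univ.val) {t : A × A × A} (ht : t ∈ T)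
    (hd : t.1 ≠ t.2.1 ∧ t.1 ≠ t.2.2 ∧ t.2.1 ≠ t.2.2)
    (hbetw : [t.1, t.2.1, t.2.2].Sublist s ∨ [t.2.2, t.2.1, t.1].Sublist s) :
    ∃ w₁ w₂ w₃ w₄ : List ((A ⊕ (A × A × A)) × Bool),
      (w₁ : Multiset _) = c1Type t ∧ (w₂ : Multiset _) = c2Type t ∧
      (w₃ : Multiset _) = c1Type t ∧ (w₄ : Multiset _) = c4Type t ∧
      ReducesToNil T (posWord s ++ w₁ ++ w₂ ++ w₃ ++ w₄) := by
  obtain ⟨p, q, hpq, hsub⟩ : ∃ p q, (p = t.1 ∧ q = t.2.2 ∨ p = t.2.2 ∧ q = t.1) ∧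
      [p, t.2.1, q].Sublist s :=
    hbetw.elim (⟨_, _, .inl ⟨rfl, rfl⟩, ·⟩) (⟨_, _, .inr ⟨rfl, rfl⟩, ·⟩)
  obtain ⟨L, S₁, rfl, h₁⟩ := List.exists_eq_append_cons_of_cons_sublist hsub
  obtain ⟨M₁, S₂, rfl, h₂⟩ := List.exists_eq_append_cons_of_cons_sublist h₁
  obtain ⟨M₂, M₃, rfl, -⟩ := List.exists_eq_append_cons_of_cons_sublist h₂
  have hw := wSet_val_eq hd hpq L M₁ M₂ M₃ hs
  refine ⟨_, _, _, _, coe_popWord ?_ _, coe_popWord ?_ _, coe_popWord ?_ _, coe_dualWord hw,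
    reducesToNil_posWord_append_popWord L M₁ M₂ M₃ p t.2.1 q (.inr t)
      (.inr ⟨p, t, ht, rfl, rfl, by tauto⟩) (.inr ⟨q, t, ht, rfl, rfl, by tauto⟩)⟩
  all_goals rw [hw]; simp only [← Multiset.coe_add]; abel

end OrderToSentence

section Evaluation

variable {A G : Type*} [Group G]

def evalLetter (φ : A ⊕ (A × A × A) → G) (l : (A ⊕ (A × A × A)) × Bool) : G :=
  if l.2 then (φ l.1)⁻¹ else φ l.1

@[simp] lemma evalLetter_false (φ : A ⊕ (A × A × A) → G) (g : A ⊕ (A × A × A)) :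
    evalLetter φ (g, false) = φ g := rfl

@[simp] lemma evalLetter_true (φ : A ⊕ (A × A × A) → G) (g : A ⊕ (A × A × A)) :
    evalLetter φ (g, true) = (φ g)⁻¹ := rfl

variable {T : Finset (A × A × A)} {φ : A ⊕ (A × A × A) → G} {S : Set (A ⊕ (A × A × A))}

lemma Contract.prod_map_evalLetter_eq (hφ : ∀ g ∈ S, ∀ g' ∈ S, R T g g' → φ g = φ g')
    {w w' : List ((A ⊕ (A × A × A)) × Bool)} (hw : ∀ l ∈ w, l.1 ∈ S)
    (h : Contract T w w') :
    (w'.map (evalLetter φ)).prod = (w.map (evalLetter φ)).prod := by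
  cases h with
  | pos u v g g' hg =>
    have : φ g = φ g' :=
      hg.elim (congrArg φ) (hφ g (hw (g, false) (by simp)) g' (hw (g', true) (by simp)))
    simp [this]
  | neg u v g g' hg =>
    have : φ g = φ g' :=
      hg.elim (congrArg φ) (hφ g (hw (g, false) (by simp)) g' (hw (g', true) (by simp)))
    simp [this]

lemma ReducesToNil.prod_map_evalLetter_eq_one
    (hφ : ∀ g ∈ S, ∀ g' ∈ S, R T g g' → φ g = φ g')
    {w : List ((A ⊕ (A × A × A)) × Bool)} (hw : ∀ l ∈ w, l.1 ∈ S)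
    (h : ReducesToNil T w) :
    (w.map (evalLetter φ)).prod = 1 := by
  induction h using Relation.ReflTransGen.head_induction_on with
  | refl => rfl
  | head hc _ ih =>
    rw [← hc.prod_map_evalLetter_eq hφ hw]
    exact ih fun l hl => hw l (hc.sublist.subset hl)

end Evaluation

section SentenceToOrder

variable {A : Type*} [DecidableEq A]

def tripleRep (t : A × A × A) : A ⊕ (A × A × A) → Equiv.Perm (Fin 3)
  | .inl x =>
    if x = t.1 ∨ x = t.2.2 then Equiv.swap 0 1 else if x = t.2.1 then Equiv.swap 0 2 else 1
  | .inr _ => Equiv.swap 0 1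

lemma tripleRep_eq_of_R {T : Finset (A × A × A)} {t : A × A × A} :
    ∀ g ∈ insert (Sum.inr t) (Set.range Sum.inl),
      ∀ g' ∈ insert (Sum.inr t) (Set.range Sum.inl),
        R T g g' → tripleRep t g = tripleRep t g' := by
  rintro _ - _ hg' ⟨x, t', -, rfl, rfl, hx⟩
  obtain rfl : t' = t := by simpa using hg'
  simp [tripleRep, hx]

lemma prod_map_evalLetter_tripleRep_posWord (t : A × A × A) (s : List A) :
    ((posWord s).map (evalLetter (tripleRep t))).prod =
      ((s.filter (· ∈ [t.1, t.2.1, t.2.2])).map (tripleRep t ∘ Sum.inl)).prod := by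
  rw [List.prod_map_filter_of_eq_one]
  · simp [posWord, Function.comp_def]
  · intro x _ hx
    simp only [List.mem_cons, List.not_mem_nil, or_false, decide_eq_false_iff_not,
      not_or] at hx
    simp [tripleRep, hx.1, hx.2.1, hx.2.2]

variable [Fintype A] {t : A × A × A} {w : List ((A ⊕ (A × A × A)) × Bool)}

lemma exists_mem_wSet_of_mem_wPart {l : (A ⊕ (A × A × A)) × Bool} (hl : l ∈ wPart t) :
    ∃ x ∈ wSet t, l.1 = Sum.inl x := by
  simp only [wPart, Multiset.mem_add, Multiset.mem_map] at hl
  rcases hl with ⟨x, hx, rfl⟩ | ⟨x, hx, rfl⟩ <;> exact ⟨x, hx, rfl⟩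

lemma mem_wPart_of_coe_eq_c4Type (hw : (w : Multiset _) = c4Type t) : ∀ l ∈ w, l ∈ wPart t :=
  fun l hl => by
    have hl : l ∈ c4Type t := hw ▸ Multiset.mem_coe.2 hl
    exact Multiset.mem_add.2 (.inl hl)

lemma fst_mem_of_mem_coe_eq_cons_wPart {g : A ⊕ (A × A × A)}
    (hw : (w : Multiset _) = (g, true) ::ₘ wPart t) {l : (A ⊕ (A × A × A)) × Bool}
    (hl : l ∈ w) :
    l.1 ∈ insert g (Set.range Sum.inl) := by
  rcases Multiset.mem_cons.1 (hw ▸ Multiset.mem_coe.2 hl) with rfl | hl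
  · exact .inl rfl
  · obtain ⟨x, -, hx⟩ := exists_mem_wSet_of_mem_wPart hl
    exact .inr ⟨x, hx.symm⟩

lemma evalLetter_tripleRep_of_mem_wPart {l : (A ⊕ (A × A × A)) × Bool} (hl : l ∈ wPart t) :
    evalLetter (tripleRep t) l = 1 := by
  obtain ⟨x, hx, hlx⟩ := exists_mem_wSet_of_mem_wPart hl
  simp only [wSet, Finset.mem_sdiff, Finset.mem_univ, Finset.mem_insert,
    Finset.mem_singleton, true_and, not_or] at hx
  obtain ⟨g, _ | _⟩ := l <;> simp_all [tripleRep]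

lemma prod_map_evalLetter_tripleRep_of_coe_eq_cons {g : A ⊕ (A × A × A)}
    (hw : (w : Multiset _) = (g, true) ::ₘ wPart t) :
    (w.map (evalLetter (tripleRep t))).prod = (tripleRep t g)⁻¹ :=
  List.prod_map_eq_of_coe_eq_cons hw fun _ => evalLetter_tripleRep_of_mem_wPart

lemma prod_map_evalLetter_tripleRep_of_coe_eq_c4Type (hw : (w : Multiset _) = c4Type t) :
    (w.map (evalLetter (tripleRep t))).prod = 1 :=
  List.prod_eq_one fun _ hy => by
    obtain ⟨l, hl, rfl⟩ := List.mem_map.1 hy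
    exact evalLetter_tripleRep_of_mem_wPart (mem_wPart_of_coe_eq_c4Type hw l hl)

lemma sublist_of_reducesToNil {T : Finset (A × A × A)} {s : List A} (hmem : ∀ x, x ∈ s)
    (hnd : s.Nodup) (hd : t.1 ≠ t.2.1 ∧ t.1 ≠ t.2.2 ∧ t.2.1 ≠ t.2.2)
    {w₁ w₂ w₃ w₄ : List ((A ⊕ (A × A × A)) × Bool)}
    (h₁ : (w₁ : Multiset _) = c1Type t) (h₂ : (w₂ : Multiset _) = c2Type t)
    (h₃ : (w₃ : Multiset _) = c1Type t) (h₄ : (w₄ : Multiset _) = c4Type t)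
    (hred : ReducesToNil T (posWord s ++ w₁ ++ w₂ ++ w₃ ++ w₄)) :
    [t.1, t.2.1, t.2.2].Sublist s ∨ [t.2.2, t.2.1, t.1].Sublist s := by
  have hletters : ∀ l ∈ posWord s ++ w₁ ++ w₂ ++ w₃ ++ w₄,
      l.1 ∈ insert (Sum.inr t) (Set.range Sum.inl) := by
    simp only [List.mem_append]
    rintro l ((((hl | hl) | hl) | hl) | hl)
    · obtain ⟨x, -, rfl⟩ := List.mem_map.1 hl
      exact .inr ⟨x, rfl⟩
    · exact fst_mem_of_mem_coe_eq_cons_wPart h₁ hl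
    · exact .inr (by simpa using fst_mem_of_mem_coe_eq_cons_wPart h₂ hl)
    · exact fst_mem_of_mem_coe_eq_cons_wPart h₃ hl
    · obtain ⟨x, -, hx⟩ := exists_mem_wSet_of_mem_wPart (mem_wPart_of_coe_eq_c4Type h₄ l hl)
      exact .inr ⟨x, hx.symm⟩
  have hprod := hred.prod_map_evalLetter_eq_one tripleRep_eq_of_R hletters
  simp only [List.map_append, List.prod_append, prod_map_evalLetter_tripleRep_posWord,
    prod_map_evalLetter_tripleRep_of_coe_eq_cons h₁,
    prod_map_evalLetter_tripleRep_of_coe_eq_cons h₂,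
    prod_map_evalLetter_tripleRep_of_coe_eq_cons h₃,
    prod_map_evalLetter_tripleRep_of_coe_eq_c4Type h₄] at hprod
  obtain ⟨a, b, c⟩ := t
  obtain ⟨hab, hac, hbc⟩ := hd
  dsimp only at *
  have hperm : (s.filter (· ∈ [a, b, c])).Perm [a, b, c] := by
    rw [List.perm_ext_iff_of_nodup (hnd.filter _) (by simp [hab, hac, hbc])]
    simp [hmem]
  rcases hperm.eq_triple_cases with h | h | h | h | h | h
  · exact .inl (h ▸ List.filter_sublist)
  · exact .inr (h ▸ List.filter_sublist)
  all_goals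
    rw [h] at hprod
    simp [tripleRep, hac, hbc, hab.symm, hac.symm] at hprod
    exact absurd hprod (by decide)

end SentenceToOrder

lemma exists_eq_posWord_of_coe_eq_yType {A : Type*} [Fintype A]
    {w : List ((A ⊕ (A × A × A)) × Bool)} (hw : (w : Multiset _) = yType A) :
    ∃ s : List A, w = posWord s ∧ (s : Multiset A) = Finset.univ.val := by
  have : w ∈ Set.range (List.map fun x : A => ((Sum.inl x : A ⊕ (A × A × A)), false)) := by
    rw [Set.range_list_map]
    intro l hl
    obtain ⟨x, -, hx⟩ := Multiset.mem_map.1 (hw ▸ Multiset.mem_coe.2 hl)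
    exact ⟨x, hx⟩
  obtain ⟨s, rfl⟩ := this
  have hinj : Function.Injective fun x : A => ((Sum.inl x : A ⊕ (A × A × A)), false) :=
    fun x y h => by simpa using h
  refine ⟨s, rfl, Multiset.map_injective hinj ?_⟩
  rwa [Multiset.map_coe]

/-- Mathematical core of NP-completeness of grammar induction from a compact closed
category to a pivotal category, via reduction from the betweenness problem: assuming
every triple of `T` has pairwise distinct entries, the betweenness instance `(A, T)` has
a solution iff the grammar induction sample has a solution. -/
theorem betweenness_iff_induction {A : Type*} [Fintype A] [DecidableEq A]
    (T : Finset (A × A × A))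
    (hdist : ∀ t ∈ T, t.1 ≠ t.2.1 ∧ t.1 ≠ t.2.2 ∧ t.2.1 ≠ t.2.2) :
    (∃ r : LinearOrder A, ∀ t ∈ T,
        (r.lt t.1 t.2.1 ∧ r.lt t.2.1 t.2.2) ∨ (r.lt t.2.2 t.2.1 ∧ r.lt t.2.1 t.1)) ↔
    (∃ (hY : List ((A ⊕ (A × A × A)) × Bool))
        (h1 h2 h3 h4 : (A × A × A) → List ((A ⊕ (A × A × A)) × Bool)),
      (↑hY : Multiset ((A ⊕ (A × A × A)) × Bool)) = yType A ∧
      ∀ t ∈ T,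
        (↑(h1 t) : Multiset ((A ⊕ (A × A × A)) × Bool)) = c1Type t ∧
        (↑(h2 t) : Multiset ((A ⊕ (A × A × A)) × Bool)) = c2Type t ∧
        (↑(h3 t) : Multiset ((A ⊕ (A × A × A)) × Bool)) = c1Type t ∧
        (↑(h4 t) : Multiset ((A ⊕ (A × A × A)) × Bool)) = c4Type t ∧
        ReducesToNil T (hY ++ h1 t ++ h2 t ++ h3 t ++ h4 t)) := by
  constructor
  · rintro ⟨r, hr⟩
    let s := Finset.univ.sort (α := A) (· ≤ ·)
    have hs : (s : Multiset A) = Finset.univ.val := Finset.sort_eq _ _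
    have hmem : ∀ x, x ∈ s := fun x => (Finset.mem_sort _).2 (Finset.mem_univ x)
    have hsub {x y z : A} : x < y ∧ y < z → [x, y, z].Sublist s :=
      (List.cons_cons_singleton_sublist_iff
        (List.sortedLT_iff_pairwise.1 (Finset.sortedLT_sort _)) (hmem x) (hmem y) (hmem z)).2
    choose! w₁ w₂ w₃ w₄ hw using fun t ht =>
      exists_reducesToNil_of_sublist hs ht (hdist t ht) ((hr t ht).imp hsub hsub)
    refine ⟨posWord s, w₁, w₂, w₃, w₄, ?_, hw⟩
    simp [posWord, ← Multiset.map_coe, hs, yType]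
  · rintro ⟨_, w₁, w₂, w₃, w₄, hY, hw⟩
    obtain ⟨s, rfl, hs⟩ := exists_eq_posWord_of_coe_eq_yType hY
    have hnd : s.Nodup := Multiset.coe_nodup.1 (hs ▸ Finset.univ.nodup)
    have hmem : ∀ x, x ∈ s := fun x => Multiset.mem_coe.1 (hs ▸ Finset.mem_univ x)
    let _ : LinearOrder A := LinearOrder.lift' s.idxOf fun x y h => (List.idxOf_inj (hmem x)).1 h
    have hsub {x y z : A} : [x, y, z].Sublist s → x < y ∧ y < z :=
      (List.cons_cons_singleton_sublist_iff hnd.pairwise_idxOf_lt (hmem x) (hmem y) (hmem z)).1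
    refine ⟨inferInstance, fun t ht => ?_⟩
    obtain ⟨h₁, h₂, h₃, h₄, hred⟩ := hw t ht
    exact (sublist_of_reducesToNil hmem hnd (hdist t ht) h₁ h₂ h₃ h₄ hred).imp hsub hsub
end
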